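/- Fix λ, μ > 0 and w > 0. For λᵢ ∈ (0, λ], define D(λᵢ) = √((λ+μ)² − 4λᵢμ), a = (−(λ+μ)+D)/2, b = (−(λ+μ)−D)/2, and P(λᵢ) := (a e^{bw} − b e^{aw})/(a − b). Then P is strictly decreasing in λᵢ on the interval where D > 0. -/

import Mathlib

noncomputable def PA (lam mu w li : ℝ) : ℝ :=
  let D := Real.sqrt ((lam + mu)^2 - 4 * li * mu)
  let a := (-(lam + mu) + D)/2
  let b := (-(lam + mu) - D)/2
  (a * Real.exp (b * w) - b * Real.exp (a * w)) / (a - b)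

/-!
With `s = λ + μ`, `D = √(s² − 4λᵢμ) > 0` and `x = Dw/2` one has `a − b = D` and
`P(λᵢ) = e^{−sw/2} (cosh x + (sw/2) · sinh x / x)`. Both `cosh x` and `sinh x / x` (the slope
through the origin of `sinh`, which is convex on `x ≥ 0`) increase strictly for `x > 0`, while `x`
decreases strictly in `λᵢ`.
-/

open Real Set

lemma Real.strictConvexOn_sinh : StrictConvexOn ℝ (Ici 0) sinh := by
  apply StrictMonoOn.strictConvexOn_of_deriv (convex_Ici 0) continuous_sinh.continuousOn
  rw [deriv_sinh, interior_Ici]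
  exact cosh_strictMonoOn.mono Ioi_subset_Ici_self

lemma Real.strictMonoOn_sinh_div_self : StrictMonoOn (fun x => sinh x / x) (Ioi 0) :=
  fun x hx y hy hxy => by
    simpa using strictConvexOn_sinh.secant_strict_mono self_mem_Ici (Ioi_subset_Ici_self hx)
      (Ioi_subset_Ici_self hy) hx.ne' hy.ne' hxy

lemma Real.strictMonoOn_cosh_add_mul_sinh_div_self {c : ℝ} (hc : 0 ≤ c) :
    StrictMonoOn (fun x => cosh x + c * (sinh x / x)) (Ioi 0) := fun _ hx _ hy hxy =>
  add_lt_add_of_lt_of_le (cosh_strictMonoOn (Ioi_subset_Ici_self hx) (Ioi_subset_Ici_self hy) hxy)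
    (mul_le_mul_of_nonneg_left (strictMonoOn_sinh_div_self hx hy hxy).le hc)

lemma PA_eq_exp_mul_cosh_add_sinh_div (lam mu li : ℝ) {w : ℝ} (hw : w ≠ 0)
    (hli : 4 * li * mu < (lam + mu) ^ 2) :
    PA lam mu w li = exp (-((lam + mu) * w / 2)) *
      (cosh (√((lam + mu) ^ 2 - 4 * li * mu) * w / 2) +
        (lam + mu) * w / 2 * (sinh (√((lam + mu) ^ 2 - 4 * li * mu) * w / 2) /
          (√((lam + mu) ^ 2 - 4 * li * mu) * w / 2))) := by
  have hD : √((lam + mu) ^ 2 - 4 * li * mu) ≠ 0 := (sqrt_pos.mpr (by linarith)).ne'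
  simp only [PA]
  set D := √((lam + mu) ^ 2 - 4 * li * mu)
  have ha : (-(lam + mu) + D) / 2 * w = -((lam + mu) * w / 2) + D * w / 2 := by ring
  have hb : (-(lam + mu) - D) / 2 * w = -((lam + mu) * w / 2) + -(D * w / 2) := by ring
  have hab : (-(lam + mu) + D) / 2 - (-(lam + mu) - D) / 2 = D := by ring
  rw [ha, hb, hab, exp_add, exp_add, cosh_eq, sinh_eq]
  field_simp
  ring

theorem PA_strictAnti (lam mu w : ℝ) (hlam : 0 < lam) (hmu : 0 < mu) (hw : 0 < w) :
    StrictAntiOn (PA lam mu w)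
      {li | li ∈ Set.Ioc 0 lam ∧ 4 * li * mu < (lam + mu)^2} := by
  rintro x ⟨-, hxD⟩ y ⟨-, hyD⟩ hxy
  have hDy : 0 < √((lam + mu) ^ 2 - 4 * y * mu) := sqrt_pos.mpr (by linarith)
  have hD_lt : √((lam + mu) ^ 2 - 4 * y * mu) < √((lam + mu) ^ 2 - 4 * x * mu) :=
    sqrt_lt_sqrt (by linarith) (by nlinarith)
  rw [PA_eq_exp_mul_cosh_add_sinh_div lam mu x hw.ne' hxD,
    PA_eq_exp_mul_cosh_add_sinh_div lam mu y hw.ne' hyD]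
  refine mul_lt_mul_of_pos_left ?_ (exp_pos _)
  exact strictMonoOn_cosh_add_mul_sinh_div_self (by positivity)
    (div_pos (mul_pos hDy hw) two_pos) (div_pos (mul_pos (hDy.trans hD_lt) hw) two_pos)
    (by gcongr)
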